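/- arXiv:math/0702846 — 3 statements merged into one kernel-verified Lean document; each statement's English description precedes it below -/
import Mathlib

section
/- Let K be a differential field with derivation ∂, let A be a differential Hopf algebra over K, and let V be a finite-dimensional differential A-comodule with basis v_1,…,v_n and ρ(v_j) = Σ_i v_i ⊗ a_{ij}. Define V^{(1)} = K[∂]_{≤1} ⊗ V (a K-space with basis v_1,…,v_n, ∂v_1,…,∂v_n) and ρ^{(1)}(v_j) = Σ_i v_i ⊗ a_{ij}, ρ^{(1)}(∂v_j) = Σ_i (∂v_i ⊗ a_{ij} + v_i ⊗ ∂a_{ij}). Then ρ^{(1)} : V^{(1)} → V^{(1)} ⊗ A is an A-comodule structure on V^{(1)}. -/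
/-!
In the basis `v, ∂v` the map `ρ^{(1)}` is the coaction of the block matrix `[[a, ∂a], [0, a]]`,
and the coaction of a matrix `c` is coassociative and counital as soon as `c` is multiplicative:
`Δ c_pq = ∑_r c_pr ⊗ c_rq` and `ε c_pq = δ_pq`. The block matrix inherits this from `a`: its only
new entries are the `∂a_ij`, and `Δ (∂a_ij) = ∂ (Δ a_ij) = ∑_r (∂a_ir ⊗ a_rj + a_ir ⊗ ∂a_rj)` is
the `(v_i, ∂v_j)` entry of the square of the block matrix, while `ε (∂a_ij) = ∂ δ_ij = 0`
because a derivation kills `0` and `1`.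
-/

open TensorProduct

/-- The coaction on `ι → K` associated to a matrix `c : ι → ι → A` of coefficients:
the basis vector `e q` is sent to `∑ p, e p ⊗ c p q`. -/
noncomputable def matCoact (K A : Type*) [Field K] [CommRing A] [Algebra K A]
    {ι : Type*} [Fintype ι] [DecidableEq ι] (c : ι → ι → A) :
    (ι → K) →ₗ[K] (ι → K) ⊗[K] A :=
  ∑ p, ∑ q, (TensorProduct.mk K (ι → K) A (Pi.single p 1)).comp
    ((LinearMap.proj q).smulRight (c p q))

/-- The block matrix of the prolonged coaction `ρ^{(1)}` on `V^{(1)}`: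
in the ordered basis `v_1, …, v_n, ∂v_1, …, ∂v_n` it is `[[a, ∂a],[0, a]]`. -/
def prolongMat {A ι : Type*} [CommRing A] (dA : A → A) (a : ι → ι → A) :
    (ι ⊕ ι) → (ι ⊕ ι) → A
  | Sum.inl i, Sum.inl j => a i j
  | Sum.inl i, Sum.inr j => dA (a i j)
  | Sum.inr _, Sum.inl _ => 0
  | Sum.inr i, Sum.inr j => a i j

section MatCoact

variable {K A : Type*} [Field K] [CommRing A] {ι : Type*} [Fintype ι] [DecidableEq ι]

lemma matCoact_single [Algebra K A] (c : ι → ι → A) (q : ι) :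
    matCoact K A c (Pi.single q 1) = ∑ p, Pi.single p (1 : K) ⊗ₜ[K] c p q := by
  simp only [matCoact, LinearMap.sum_apply, LinearMap.comp_apply, LinearMap.smulRight_apply,
    LinearMap.proj_apply, TensorProduct.mk_apply]
  refine Finset.sum_congr rfl fun p _ => ?_
  rw [Finset.sum_eq_single q (fun r _ hr => by simp [hr]) (by simp)]
  simp

variable [Bialgebra K A] (c : ι → ι → A)

lemma matCoact_coassoc (hc : ∀ p q, Coalgebra.comul (R := K) (c p q) = ∑ r, c p r ⊗ₜ[K] c r q) :
    (TensorProduct.assoc K (ι → K) A A).toLinearMap ∘ₗ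
        TensorProduct.map (matCoact K A c) LinearMap.id ∘ₗ matCoact K A c =
      TensorProduct.map LinearMap.id (Coalgebra.comul (R := K)) ∘ₗ matCoact K A c := by
  refine (Pi.basisFun K ι).ext fun q => ?_
  simp only [LinearMap.comp_apply, Pi.basisFun_apply, matCoact_single, map_sum,
    TensorProduct.map_tmul, LinearMap.id_apply, hc, LinearEquiv.coe_coe,
    TensorProduct.sum_tmul, TensorProduct.assoc_tmul, TensorProduct.tmul_sum]
  exact Finset.sum_comm

lemma matCoact_counit (hc : ∀ p q, Coalgebra.counit (R := K) (c p q) = if p = q then 1 else 0)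
    (v : ι → K) :
    TensorProduct.rid K (ι → K)
        (TensorProduct.map LinearMap.id (Coalgebra.counit (R := K)) (matCoact K A c v)) = v := by
  suffices h : (TensorProduct.rid K (ι → K)).toLinearMap ∘ₗ
      TensorProduct.map LinearMap.id (Coalgebra.counit (R := K)) ∘ₗ matCoact K A c =
        LinearMap.id from LinearMap.congr_fun h v
  refine (Pi.basisFun K ι).ext fun q => ?_
  simp only [LinearMap.comp_apply, Pi.basisFun_apply, matCoact_single, map_sum,
    TensorProduct.map_tmul, LinearMap.id_apply, hc, LinearEquiv.coe_coe,
    TensorProduct.rid_tmul, ite_smul, one_smul, zero_smul]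
  simp

end MatCoact

section ProlongMat

variable {K A : Type*} [Field K] [CommRing A] [Bialgebra K A] {ι : Type*}
  (dA : A → A) (a : ι → ι → A)

lemma comul_prolongMat [Fintype ι] (dT : A ⊗[K] A → A ⊗[K] A)
    (hTadd : ∀ x y : A ⊗[K] A, dT (x + y) = dT x + dT y)
    (hTpure : ∀ x y : A, dT (x ⊗ₜ[K] y) = dA x ⊗ₜ[K] y + x ⊗ₜ[K] dA y)
    (hΔd : ∀ x : A, Coalgebra.comul (R := K) (dA x) = dT (Coalgebra.comul (R := K) x))
    (hΔ : ∀ i j, Coalgebra.comul (R := K) (a i j) = ∑ r, a i r ⊗ₜ[K] a r j) (p q : ι ⊕ ι) :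
    Coalgebra.comul (R := K) (prolongMat dA a p q) =
      ∑ r, prolongMat dA a p r ⊗ₜ[K] prolongMat dA a r q := by
  rcases p with i | i <;> rcases q with j | j <;>
    simp only [prolongMat, Fintype.sum_sum_type, TensorProduct.zero_tmul, TensorProduct.tmul_zero,
      Finset.sum_const_zero, add_zero, zero_add, map_zero, hΔ]
  let D : A ⊗[K] A →+ A ⊗[K] A := AddMonoidHom.mk' dT hTadd
  rw [hΔd, hΔ, show dT _ = D _ from rfl, map_sum]
  simp only [D, AddMonoidHom.mk'_apply, hTpure, Finset.sum_add_distrib, add_comm]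

lemma counit_prolongMat [DecidableEq ι] (dK : K → K)
    (hKmul : ∀ x y : K, dK (x * y) = dK x * y + x * dK y)
    (hεd : ∀ x : A, Coalgebra.counit (R := K) (dA x) = dK (Coalgebra.counit (R := K) x))
    (hε : ∀ i j, Coalgebra.counit (R := K) (a i j) = if i = j then 1 else 0) (p q : ι ⊕ ι) :
    Coalgebra.counit (R := K) (prolongMat dA a p q) = if p = q then 1 else 0 := by
  have hdK0 : dK 0 = 0 := by simpa using hKmul 0 0
  have hdK1 : dK 1 = 0 := by simpa using hKmul 1 1
  rcases p with i | i <;> rcases q with j | j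
  case inl.inr =>
    rw [prolongMat, hεd, hε, if_neg Sum.inl_ne_inr]
    split_ifs <;> assumption
  all_goals simp [prolongMat, hε]

end ProlongMat

theorem stmt_4_general {K A : Type*} [Field K] [CommRing A] [HopfAlgebra K A]
    (dK : K → K)
    (hKmul : ∀ x y : K, dK (x * y) = dK x * y + x * dK y)
    (dA : A → A)
    (dT : A ⊗[K] A → A ⊗[K] A)
    (hTadd : ∀ x y : A ⊗[K] A, dT (x + y) = dT x + dT y)
    (hTpure : ∀ x y : A, dT (x ⊗ₜ[K] y) = dA x ⊗ₜ[K] y + x ⊗ₜ[K] dA y)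
    (hΔd : ∀ x : A, Coalgebra.comul (R := K) (dA x) = dT (Coalgebra.comul (R := K) x))
    (hεd : ∀ x : A, Coalgebra.counit (R := K) (dA x) = dK (Coalgebra.counit (R := K) x))
    (n : ℕ) (a : Fin n → Fin n → A)
    (hΔ : ∀ i j, Coalgebra.comul (R := K) (a i j) = ∑ r, a i r ⊗ₜ[K] a r j)
    (hε : ∀ i j, Coalgebra.counit (R := K) (a i j) = if i = j then (1 : K) else 0) :
    ((TensorProduct.assoc K (Fin n ⊕ Fin n → K) A A).toLinearMap ∘ₗ
        (TensorProduct.map (matCoact K A (prolongMat dA a)) LinearMap.id) ∘ₗ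
          matCoact K A (prolongMat dA a) =
      (TensorProduct.map LinearMap.id (Coalgebra.comul (R := K))) ∘ₗ
        matCoact K A (prolongMat dA a)) ∧
    ∀ v : Fin n ⊕ Fin n → K,
      (TensorProduct.rid K (Fin n ⊕ Fin n → K))
        ((TensorProduct.map LinearMap.id (Coalgebra.counit (R := K)))
          (matCoact K A (prolongMat dA a) v)) = v :=
  ⟨matCoact_coassoc _ (comul_prolongMat dA a dT hTadd hTpure hΔd hΔ),
    matCoact_counit _ (counit_prolongMat dA a dK hKmul hεd hε)⟩

/-- Prolongation of a differential comodule: if `ρ(v_j) = ∑ v_i ⊗ a i j` is an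
`A`-comodule structure, then `ρ^{(1)}(v_j) = ∑ v_i ⊗ a i j`,
`ρ^{(1)}(∂v_j) = ∑ (∂v_i ⊗ a i j + v_i ⊗ ∂a i j)` is an `A`-comodule structure on
`V^{(1)}`, i.e. it is coassociative and counital. -/
theorem stmt_4 {K A : Type*} [Field K] [CharZero K] [CommRing A] [HopfAlgebra K A]
    (dK : K → K)
    (hKadd : ∀ x y : K, dK (x + y) = dK x + dK y)
    (hKmul : ∀ x y : K, dK (x * y) = dK x * y + x * dK y)
    (dA : A → A)
    (hAadd : ∀ x y : A, dA (x + y) = dA x + dA y)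
    (hAmul : ∀ x y : A, dA (x * y) = dA x * y + x * dA y)
    (hAalg : ∀ k : K, dA (algebraMap K A k) = algebraMap K A (dK k))
    (dT : A ⊗[K] A → A ⊗[K] A)
    (hTadd : ∀ x y : A ⊗[K] A, dT (x + y) = dT x + dT y)
    (hTpure : ∀ x y : A, dT (x ⊗ₜ[K] y) = dA x ⊗ₜ[K] y + x ⊗ₜ[K] dA y)
    (hΔd : ∀ x : A, Coalgebra.comul (R := K) (dA x) = dT (Coalgebra.comul (R := K) x))
    (hεd : ∀ x : A, Coalgebra.counit (R := K) (dA x) = dK (Coalgebra.counit (R := K) x))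
    (n : ℕ) (a : Fin n → Fin n → A)
    (hΔ : ∀ i j, Coalgebra.comul (R := K) (a i j) = ∑ r, a i r ⊗ₜ[K] a r j)
    (hε : ∀ i j, Coalgebra.counit (R := K) (a i j) = if i = j then (1 : K) else 0) :
    ((TensorProduct.assoc K (Fin n ⊕ Fin n → K) A A).toLinearMap ∘ₗ
        (TensorProduct.map (matCoact K A (prolongMat dA a)) LinearMap.id) ∘ₗ
          matCoact K A (prolongMat dA a) =
      (TensorProduct.map LinearMap.id (Coalgebra.comul (R := K))) ∘ₗ
        matCoact K A (prolongMat dA a)) ∧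
    ∀ v : Fin n ⊕ Fin n → K,
      (TensorProduct.rid K (Fin n ⊕ Fin n → K))
        ((TensorProduct.map LinearMap.id (Coalgebra.counit (R := K)))
          (matCoact K A (prolongMat dA a) v)) = v :=
  stmt_4_general dK hKmul dA dT hTadd hTpure hΔd hεd n a hΔ hε
end

section
/- Let B be the matrix of a representation of a differential algebraic group G on an n-dimensional space V, i.e., Δ(b_{ij}) = Σ_l b_{il} ⊗ b_{lj} in a differential Hopf algebra A, with entries b_{ij} ∈ A. For a fixed i ≥ 0, define the block lower-triangular (i+1)n × (i+1)n matrix B_i whose (m,r) block (0 ≤ r ≤ m ≤ i) is C(i-r, m-r)·∂^{m-r}(B) in a suitable indexing. Then the entries c_{pq} of B_i again satisfy Δ(c_{pq}) = Σ_s c_{ps} ⊗ c_{sq}; i.e., B_i defines a comodule structure on V^{(i)}. -/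
/-!
Since `Δ` commutes with `∂`, and `∂` acts on `A ⊗ A` by the Leibniz rule, the general Leibniz
formula gives `Δ(∂^k b_pq) = ∑_l ∑_{a+t=k} C(k,a) ∂^a b_pl ⊗ ∂^t b_lq`. In `∑_S c_PS ⊗ c_SQ` for
`P = (m,p)`, `Q = (r,q)` only the block rows `s = r + t` with `r ≤ s ≤ m` survive, and the
coefficients match by `C(N-t, a) C(N, t) = C(N, a+t) C(a+t, a)` with `N = i - r`.
-/

open TensorProduct Finset

theorem iterate_tmul_of_leibniz {R M N : Type*} [CommSemiring R] [AddCommMonoid M]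
    [AddCommMonoid N] [Module R M] [Module R N] (dM : M → M) (dN : N → N)
    (D : AddMonoid.End (M ⊗[R] N)) (hD : ∀ x y, D (x ⊗ₜ y) = dM x ⊗ₜ y + x ⊗ₜ dN y)
    (k : ℕ) (x : M) (y : N) :
    D^[k] (x ⊗ₜ y) = ∑ ij ∈ antidiagonal k, k.choose ij.1 • (dM^[ij.1] x ⊗ₜ dN^[ij.2] y) := by
  induction k with
  | zero => simp
  | succ k ih =>
    rw [sum_antidiagonal_choose_succ_nsmul (fun a b => dM^[a] x ⊗ₜ[R] dN^[b] y) k]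
    simp only [Function.iterate_succ_apply', ih, map_sum, map_nsmul, hD, smul_add,
      sum_add_distrib, add_comm]
    congr 1
    refine sum_congr rfl fun ij hij => ?_
    rw [k.choose_symm_of_eq_add (mem_antidiagonal.1 hij).symm]

theorem sum_range_eq_sum_antidiagonal_of_eq_zero {M : Type*} [AddCommMonoid M] {g : ℕ → M}
    {r m i : ℕ} (hg : ∀ s ∉ Icc r m, g s = 0) (hrm : r ≤ m) (hm : m < i) :
    ∑ s ∈ range i, g s = ∑ ij ∈ antidiagonal (m - r), g (r + ij.2) := by
  rw [← sum_subset (fun s hs => mem_range.2 ((mem_Icc.1 hs).2.trans_lt hm))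
    fun s _ hs => hg s hs]
  refine sum_nbij' (fun s => (m - s, s - r)) (fun ij => r + ij.2) ?_ ?_ ?_ ?_
    fun s hs => by rw [Nat.add_sub_cancel' (mem_Icc.1 hs).1]
  all_goals
    simp only [mem_Icc, HasAntidiagonal.mem_antidiagonal, Prod.forall, Prod.mk.injEq]
    omega

/-- The scalar `C(i-r, m-r)` of the `(m, r)` block, extended by zero above the diagonal so that
every entry of the block matrix is `prolongCoeff i m r • ∂^(m-r) b_pq`. -/
def prolongCoeff (i m r : ℕ) : ℕ := if r ≤ m then (i - r).choose (m - r) else 0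

theorem prolongCoeff_mul_prolongCoeff_of_notMem {i m r s : ℕ} (h : s ∉ Icc r m) :
    prolongCoeff i s r * prolongCoeff i m s = 0 := by
  rw [mem_Icc, not_and_or] at h
  unfold prolongCoeff
  rcases h with h | h <;> simp [h]

theorem prolongCoeff_mul_prolongCoeff {i m r a b : ℕ} (h : a + b = m - r) (hrm : r ≤ m) :
    prolongCoeff i (r + b) r * prolongCoeff i m (r + b) =
      (i - r).choose (m - r) * (m - r).choose a := by
  have hb : b ≤ m - r := h ▸ Nat.le_add_left b a
  rw [prolongCoeff, prolongCoeff, if_pos (Nat.le_add_right r b), if_pos (by omega),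
    show m - (r + b) = m - r - b by omega, Nat.add_sub_cancel_left, Nat.sub_add_eq,
    Nat.choose_symm_of_eq_add h.symm, Nat.choose_mul hb, mul_comm]

def prolongation {A ι : Type*} [AddCommMonoid A] (d : A → A) (b : ι → ι → A) (i : ℕ) :
    Fin (i + 1) × ι → Fin (i + 1) × ι → A :=
  fun P Q => prolongCoeff i P.1 Q.1 • d^[P.1 - Q.1] (b P.2 Q.2)

section Comodule

variable {K A ι : Type*} [CommSemiring K] [AddCommMonoid A] [Module K A] [Coalgebra K A]
  [Fintype ι] {d : A → A} {dT : AddMonoid.End (A ⊗[K] A)} {b : ι → ι → A}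

theorem comul_iterate_apply (hdT : ∀ x y, dT (x ⊗ₜ y) = d x ⊗ₜ y + x ⊗ₜ d y)
    (hcomul : Function.Semiconj (Coalgebra.comul (R := K)) d dT)
    (hb : ∀ p q, Coalgebra.comul (R := K) (b p q) = ∑ l, b p l ⊗ₜ b l q) (k : ℕ) (p q : ι) :
    Coalgebra.comul (R := K) (d^[k] (b p q)) =
      ∑ l, ∑ ij ∈ antidiagonal k, k.choose ij.1 • (d^[ij.1] (b p l) ⊗ₜ d^[ij.2] (b l q)) := by
  rw [hcomul.iterate_right k (b p q), hb, ← AddMonoid.End.coe_pow, map_sum]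
  simp only [AddMonoid.End.coe_pow, iterate_tmul_of_leibniz d d dT hdT]

theorem comul_prolongation (hdT : ∀ x y, dT (x ⊗ₜ y) = d x ⊗ₜ y + x ⊗ₜ d y)
    (hcomul : Function.Semiconj (Coalgebra.comul (R := K)) d dT)
    (hb : ∀ p q, Coalgebra.comul (R := K) (b p q) = ∑ l, b p l ⊗ₜ b l q) (i : ℕ)
    (P Q : Fin (i + 1) × ι) :
    Coalgebra.comul (R := K) (prolongation d b i P Q) =
      ∑ S, prolongation d b i P S ⊗ₜ prolongation d b i S Q := by
  obtain ⟨⟨m, hm⟩, p⟩ := P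
  obtain ⟨⟨r, -⟩, q⟩ := Q
  simp only [prolongation, ← smul_tmul', tmul_smul, smul_smul, Fintype.sum_prod_type]
  rw [sum_comm]
  by_cases hrm : r ≤ m
  · rw [prolongCoeff, if_pos hrm, map_nsmul, comul_iterate_apply hdT hcomul hb, smul_sum]
    refine sum_congr rfl fun l _ => ?_
    rw [Fin.sum_univ_eq_sum_range (fun s => (prolongCoeff i s r * prolongCoeff i m s) •
        (d^[m - s] (b p l) ⊗ₜ d^[s - r] (b l q))),
      sum_range_eq_sum_antidiagonal_of_eq_zero
        (fun s hs => by rw [prolongCoeff_mul_prolongCoeff_of_notMem hs, zero_smul]) hrm hm,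
      smul_sum]
    refine sum_congr rfl fun ab hab => ?_
    have hab : ab.1 + ab.2 = m - r := mem_antidiagonal.1 hab
    rw [prolongCoeff_mul_prolongCoeff hab hrm, mul_smul, Nat.add_sub_cancel_left,
      show m - (r + ab.2) = ab.1 by omega]
  · rw [prolongCoeff, if_neg hrm, zero_smul, map_zero]
    refine (sum_eq_zero fun l _ => sum_eq_zero fun s _ => ?_).symm
    rw [prolongCoeff_mul_prolongCoeff_of_notMem fun h => hrm <| (mem_Icc.1 h).elim le_trans,
      zero_smul]

end Comodule

theorem stmt_5_general {K A : Type*} [Field K] [CommRing A] [HopfAlgebra K A]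
    (d : A → A)
    (dT : A ⊗[K] A → A ⊗[K] A)
    (hTadd : ∀ x y : A ⊗[K] A, dT (x + y) = dT x + dT y)
    (hTpure : ∀ x y : A, dT (x ⊗ₜ[K] y) = d x ⊗ₜ[K] y + x ⊗ₜ[K] d y)
    (hΔd : ∀ x : A, Coalgebra.comul (R := K) (d x) = dT (Coalgebra.comul (R := K) x))
    (n : ℕ) (b : Fin n → Fin n → A)
    (hb : ∀ p q, Coalgebra.comul (R := K) (b p q) = ∑ l, b p l ⊗ₜ[K] b l q)
    (i : ℕ)
    (c : Fin (i + 1) × Fin n → Fin (i + 1) × Fin n → A)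
    (hc : ∀ (m r : Fin (i + 1)) (p q : Fin n),
      c (m, p) (r, q) =
        if (r : ℕ) ≤ (m : ℕ) then
          ((i - (r : ℕ)).choose ((m : ℕ) - (r : ℕ))) • d^[(m : ℕ) - (r : ℕ)] (b p q)
        else 0) :
    ∀ P Q, Coalgebra.comul (R := K) (c P Q) = ∑ S, c P S ⊗ₜ[K] c S Q := by
  obtain rfl : c = prolongation d b i := by
    funext ⟨m, p⟩ ⟨r, q⟩
    rw [hc, prolongation, prolongCoeff, ite_smul, zero_smul]
  exact comul_prolongation (dT := AddMonoidHom.mk' dT hTadd) hTpure hΔd hb i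

/-- If `b` is the matrix of a representation of a differential algebraic group
(`Δ(b p q) = ∑ l, b p l ⊗ b l q` in a differential Hopf algebra `A`), then for fixed
`i ≥ 0` the block lower-triangular matrix `c` whose `(m,r)` block (for `r ≤ m ≤ i`) is
`C(i-r, m-r) • ∂^{m-r}(b)` again satisfies `Δ(c P Q) = ∑ S, c P S ⊗ c S Q`, i.e. it
defines a comodule structure on `V^{(i)}`. -/
theorem stmt_5 {K A : Type*} [Field K] [CharZero K] [CommRing A] [HopfAlgebra K A]
    (d : A → A)
    (hadd : ∀ x y : A, d (x + y) = d x + d y)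
    (hmul : ∀ x y : A, d (x * y) = d x * y + x * d y)
    (dT : A ⊗[K] A → A ⊗[K] A)
    (hTadd : ∀ x y : A ⊗[K] A, dT (x + y) = dT x + dT y)
    (hTpure : ∀ x y : A, dT (x ⊗ₜ[K] y) = d x ⊗ₜ[K] y + x ⊗ₜ[K] d y)
    (hΔd : ∀ x : A, Coalgebra.comul (R := K) (d x) = dT (Coalgebra.comul (R := K) x))
    (n : ℕ) (b : Fin n → Fin n → A)
    (hb : ∀ p q, Coalgebra.comul (R := K) (b p q) = ∑ l, b p l ⊗ₜ[K] b l q)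
    (i : ℕ)
    (c : Fin (i + 1) × Fin n → Fin (i + 1) × Fin n → A)
    (hc : ∀ (m r : Fin (i + 1)) (p q : Fin n),
      c (m, p) (r, q) =
        if (r : ℕ) ≤ (m : ℕ) then
          ((i - (r : ℕ)).choose ((m : ℕ) - (r : ℕ))) • d^[(m : ℕ) - (r : ℕ)] (b p q)
        else 0) :
    ∀ P Q, Coalgebra.comul (R := K) (c P Q) = ∑ S, c P S ⊗ₜ[K] c S Q :=
  stmt_5_general d dT hTadd hTpure hΔd n b hb i c hc
end

section
/- Let K be a field and C the category of all pairs (V, nothing) of finite-dimensional K-vector spaces with all K-linear maps as morphisms (i.e., representations of the trivial group). In the quotient space 𝒜 = (⊕_V V⊗V*)/R, where R is spanned by all elements i_V(v ⊗ φ*(t)) − i_W(φ(v) ⊗ t) over linear maps φ : V → W, the following hold: (1) for any nonzero v ∈ V and w ∈ W, the classes of v⊗v* and w⊗w* coincide (for suitable dual vectors with v*(v)=w*(w)=1); (2) for v₁, v₂ linearly independent in V, the class of v₁⊗v₂* is zero; and hence (3) 𝒜 is one-dimensional, spanned by the nonzero class of e⊗e* for the one-dimensional space. -/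
open TensorProduct

/-- The direct sum `⊕_V V ⊗ V*` over a skeleton of the finite-dimensional `K`-spaces. -/
noncomputable abbrev Fsp (K : Type*) [Field K] :=
  Π₀ n : ℕ, (Fin n → K) ⊗[K] Module.Dual K (Fin n → K)

noncomputable instance Fsp.addCommGroup (K : Type*) [Field K] : AddCommGroup (Fsp K) :=
  { DFinsupp.addCommGroup with toAddCommMonoid := DFinsupp.addCommMonoid }

/-- The canonical injection `i_V : V ⊗ V* → ⊕_W W ⊗ W*`. -/
noncomputable def iV (K : Type*) [Field K] (n : ℕ)
    (z : (Fin n → K) ⊗[K] Module.Dual K (Fin n → K)) : Fsp K :=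
  DFinsupp.lsingle (R := K) (M := fun k => (Fin k → K) ⊗[K] Module.Dual K (Fin k → K)) n z

/-- A generator `i_V((id ⊗ φ*)(z)) − i_W((φ ⊗ id)(z))` of the relation subspace. -/
noncomputable def genR (K : Type*) [Field K] (n m : ℕ)
    (φ : (Fin n → K) →ₗ[K] (Fin m → K))
    (z : (Fin n → K) ⊗[K] Module.Dual K (Fin m → K)) : Fsp K :=
  iV K n (TensorProduct.map LinearMap.id φ.dualMap z) -
    iV K m (TensorProduct.map φ LinearMap.id z)

/-- The subspace `R` spanned by the elements `i_V((id ⊗ φ*)(z)) − i_W((φ ⊗ id)(z))` over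
all linear maps `φ : V → W` and `z ∈ V ⊗ W*`. -/
noncomputable def Rsub (K : Type*) [Field K] : Submodule K (Fsp K) :=
  Submodule.span K
    { x | ∃ (n m : ℕ) (φ : (Fin n → K) →ₗ[K] (Fin m → K))
        (z : (Fin n → K) ⊗[K] Module.Dual K (Fin m → K)), x = genR K n m φ z }

/-- The class `a_V(v ⊗ u)` of `i_V(v ⊗ u)` in the quotient `𝒜 = (⊕_V V⊗V*)/R`. -/
noncomputable def aCl (K : Type*) [Field K] (n : ℕ) (v : Fin n → K)
    (u : Module.Dual K (Fin n → K)) : Fsp K ⧸ Rsub K :=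
  Submodule.Quotient.mk (iV K n (v ⊗ₜ[K] u))

/-! The relation for `φ : K → V, 1 ↦ v` expresses every class `a_V(v ⊗ u)` as `u(v)` times
`a₁ = a_K(1 ⊗ id)`, so `a₁` spans `𝒜`. Conversely, `a₁ ≠ 0` because the trace
`⊕ V ⊗ V* → K` vanishes on `R`, hence descends to `𝒜`, where it maps `a_V(v ⊗ u)` to `u(v)`. -/

lemma TensorProduct.contractRight_map_id_dualMap {R M N : Type*} [CommSemiring R]
    [AddCommMonoid M] [AddCommMonoid N] [Module R M] [Module R N] (φ : M →ₗ[R] N)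
    (z : M ⊗[R] Module.Dual R N) :
    contractRight R M (map LinearMap.id φ.dualMap z) = contractRight R N (map φ LinearMap.id z) := by
  have h : contractRight R M ∘ₗ map LinearMap.id φ.dualMap =
      contractRight R N ∘ₗ map φ LinearMap.id :=
    TensorProduct.ext' fun v t => by simp [contractRight_apply]
  exact LinearMap.congr_fun h z

section Field

variable (K : Type*) [Field K]

noncomputable def fspTrace : Fsp K →ₗ[K] K :=
  DFinsupp.lsum ℕ fun n => contractRight K (Fin n → K)

lemma fspTrace_iV (n : ℕ) (z : (Fin n → K) ⊗[K] Module.Dual K (Fin n → K)) :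
    fspTrace K (iV K n z) = contractRight K (Fin n → K) z := by
  simp [fspTrace, iV]

lemma Rsub_le_ker_fspTrace : Rsub K ≤ LinearMap.ker (fspTrace K) := by
  rw [Rsub, Submodule.span_le]
  rintro x ⟨n, m, φ, z, rfl⟩
  simp [genR, fspTrace_iV, contractRight_map_id_dualMap]

noncomputable def quotTrace : Fsp K ⧸ Rsub K →ₗ[K] K :=
  (Rsub K).liftQ (fspTrace K) (Rsub_le_ker_fspTrace K)

lemma quotTrace_aCl (n : ℕ) (v : Fin n → K) (u : Module.Dual K (Fin n → K)) :
    quotTrace K (aCl K n v u) = u v := by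
  simp [quotTrace, aCl, fspTrace_iV, contractRight_apply]

variable {K}

lemma aCl_dualMap {n m : ℕ} (φ : (Fin n → K) →ₗ[K] (Fin m → K)) (v : Fin n → K)
    (u : Module.Dual K (Fin m → K)) : aCl K n v (φ.dualMap u) = aCl K m (φ v) u := by
  have hgen : genR K n m φ (v ⊗ₜ u) ∈ Rsub K := Submodule.subset_span ⟨n, m, φ, v ⊗ₜ u, rfl⟩
  rwa [genR, map_tmul, map_tmul, LinearMap.id_apply, LinearMap.id_apply,
    ← Submodule.Quotient.eq] at hgen

lemma aCl_smul_right (n : ℕ) (v : Fin n → K) (c : K) (u : Module.Dual K (Fin n → K)) :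
    aCl K n v (c • u) = c • aCl K n v u := by
  simp only [aCl, iV, tmul_smul, map_smul, Submodule.Quotient.mk_smul]

lemma aCl_eq_smul_aCl_one (n : ℕ) (v : Fin n → K) (u : Module.Dual K (Fin n → K)) :
    aCl K n v u = u v • aCl K 1 (fun _ => 1) (LinearMap.proj 0) := by
  let φ : (Fin 1 → K) →ₗ[K] (Fin n → K) := (LinearMap.proj 0).smulRight v
  have hφ : φ (fun _ => 1) = v := by simp [φ]
  have hdual : φ.dualMap u = u v • LinearMap.proj 0 := by
    ext x
    simp [φ, mul_comm]
  rw [← hφ, ← aCl_dualMap, hdual, aCl_smul_right, hφ]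

lemma mk_iV_mem_span_aCl_one (n : ℕ) (z : (Fin n → K) ⊗[K] Module.Dual K (Fin n → K)) :
    Submodule.Quotient.mk (p := Rsub K) (iV K n z)
      ∈ Submodule.span K {aCl K 1 (fun _ => 1) (LinearMap.proj 0)} := by
  induction z using TensorProduct.induction_on with
  | zero => simp [iV]
  | tmul v u => exact Submodule.mem_span_singleton.2 ⟨u v, (aCl_eq_smul_aCl_one n v u).symm⟩
  | add x y hx hy =>
    rw [iV, map_add, Submodule.Quotient.mk_add]
    exact add_mem hx hy

lemma span_aCl_one_eq_top :
    Submodule.span K {aCl K 1 (fun _ => 1) (LinearMap.proj 0)} = ⊤ := by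
  refine Submodule.eq_top_iff'.2 fun x => ?_
  obtain ⟨y, rfl⟩ := Submodule.Quotient.mk_surjective (Rsub K) x
  induction y using DFinsupp.induction with
  | h0 => simp
  | ha n z f _ _ ih =>
    rw [Submodule.Quotient.mk_add]
    exact add_mem (mk_iV_mem_span_aCl_one n z) ih

end Field

/-- For the trivial group, the quotient `𝒜 = (⊕_V V⊗V*)/R` satisfies:
(1) the classes of `v⊗v*` and `w⊗w*` coincide for all nonzero `v`, `w` and dual vectors
with `v*(v) = w*(w) = 1`; (2) for `v₁, v₂` linearly independent the class of `v₁ ⊗ v₂*`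
is zero; hence (3) `𝒜` is one-dimensional, spanned by the nonzero class of `e ⊗ e*` for
the one-dimensional space. -/
theorem stmt_15 (K : Type*) [Field K] :
    (∀ (n m : ℕ) (v : Fin n → K) (w : Fin m → K)
        (uv : Module.Dual K (Fin n → K)) (uw : Module.Dual K (Fin m → K)),
      v ≠ 0 → w ≠ 0 → uv v = 1 → uw w = 1 → aCl K n v uv = aCl K m w uw) ∧
    (∀ (n : ℕ) (v₁ v₂ : Fin n → K) (u : Module.Dual K (Fin n → K)),
      LinearIndependent K ![v₁, v₂] → u v₁ = 0 → u v₂ = 1 → aCl K n v₁ u = 0) ∧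
    (aCl K 1 (fun _ => 1) (LinearMap.proj 0) ≠ 0 ∧
      ∀ x : Fsp K ⧸ Rsub K, ∃ c : K, x = c • aCl K 1 (fun _ => 1) (LinearMap.proj 0)) := by
  refine ⟨fun n m v w uv uw _ _ huv huw => ?_, fun n v₁ v₂ u _ hu₁ _ => ?_, fun h => ?_,
    fun x => ?_⟩
  · rw [aCl_eq_smul_aCl_one, aCl_eq_smul_aCl_one m, huv, huw]
  · rw [aCl_eq_smul_aCl_one, hu₁, zero_smul]
  · simpa [quotTrace_aCl] using congrArg (quotTrace K) h
  · have hx : x ∈ Submodule.span K {aCl K 1 (fun _ => 1) (LinearMap.proj 0)} := by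
      simp [span_aCl_one_eq_top]
    obtain ⟨c, hc⟩ := Submodule.mem_span_singleton.1 hx
    exact ⟨c, hc.symm⟩
end
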